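/- Robust test error bound (Theorem 1): Suppose true distributions P_1,…,P_M on finite alphabet X satisfy V(P_j,Q_j) ≤ ε_j for known nominal distributions Q_j, and let P̄_j(x) = (Q_j(x)+ε_j)/(1+|X|ε_j) and ε = max_j ε_j. The test declaring argmin_i D(P_{x⃗}‖P̄_i) has total error probability P(e) ≤ 2^{-n(min_{i≠j} C(P̄_i,P̄_j) - log₂(1+|X|ε) - (|X|-1)log₂(n+1)/n - (log₂ M)/n)}. -/

import Mathlib

open Finset
open scoped Classical

/-- Empirical type of a sequence. -/
noncomputable def typeOf {α : Type*} [Fintype α] [DecidableEq α] {n : ℕ} (xv : Fin n → α) :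
    α → ℝ :=
  fun a => ((Finset.univ.filter fun i => xv i = a).card : ℝ) / n

/-- Base-2 KL divergence. -/
noncomputable def KL {α : Type*} [Fintype α] (P Q : α → ℝ) : ℝ :=
  ∑ x, P x * Real.logb 2 (P x / Q x)

/-- Chernoff information with base-2 logarithm. -/
noncomputable def chernoff {α : Type*} [Fintype α] (P Q : α → ℝ) : ℝ :=
  - sInf ((fun l : ℝ => Real.logb 2 (∑ x, P x ^ l * Q x ^ (1 - l))) '' Set.Icc (0:ℝ) 1)


lemma two_rpow_sum {ι : Type*} (s : Finset ι) (f : ι → ℝ) :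
    (2:ℝ) ^ (∑ x ∈ s, f x) = ∏ x ∈ s, (2:ℝ) ^ (f x) := by
  induction s using Finset.cons_induction with
  | empty => simp
  | cons a s ha ih => rw [Finset.sum_cons, Finset.prod_cons, Real.rpow_add two_pos, ih]

lemma prod_pow_eq_rpow {α : Type*} [Fintype α] (g : α → ℝ) (c : α → ℕ)
    (h : ∀ x, 0 < g x ∨ c x = 0) :
    ∏ x, g x ^ c x = (2:ℝ) ^ (∑ x, (c x : ℝ) * Real.logb 2 (g x)) := by
  rw [two_rpow_sum]
  refine Finset.prod_congr rfl fun x _ => ?_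
  rcases h x with hg | hc
  · rw [mul_comm, Real.rpow_mul (by norm_num : (0:ℝ) ≤ 2),
      Real.rpow_logb two_pos (by norm_num) hg, Real.rpow_natCast]
  · simp [hc]

lemma abs_le_half_sum {α : Type*} [Fintype α] (f : α → ℝ) (h : ∑ x, f x = 0) (x : α) :
    |f x| ≤ (1/2) * ∑ y, |f y| := by
  have h1 : f x + ∑ y ∈ Finset.univ.erase x, f y = 0 := by
    rw [Finset.add_sum_erase _ f (Finset.mem_univ x), h]
  have h2 : |f x| = |∑ y ∈ Finset.univ.erase x, f y| := by
    rw [show f x = -(∑ y ∈ Finset.univ.erase x, f y) by linarith, abs_neg]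
  have h3 : |∑ y ∈ Finset.univ.erase x, f y| ≤ ∑ y ∈ Finset.univ.erase x, |f y| :=
    Finset.abs_sum_le_sum_abs _ _
  have h4 : |f x| + ∑ y ∈ Finset.univ.erase x, |f y| = ∑ y, |f y| := by
    rw [Finset.add_sum_erase _ (fun y => |f y|) (Finset.mem_univ x)]
  linarith


lemma gibbs_aux {α : Type*} [Fintype α] (T a : α → ℝ) (hT0 : ∀ x, 0 ≤ T x)
    (hT1 : ∑ x, T x = 1) (ha : ∀ x, 0 < a x) :
    - Real.logb 2 (∑ x, a x) ≤ ∑ x, T x * Real.logb 2 (T x / a x) := by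
  have hne : (Finset.univ : Finset α).Nonempty := by
    by_contra h
    rw [Finset.not_nonempty_iff_eq_empty] at h
    rw [h, Finset.sum_empty] at hT1
    norm_num at hT1
  set s := ∑ x, a x with hs
  have hspos : 0 < s := Finset.sum_pos (fun x _ => ha x) hne
  have key : ∑ x, T x * Real.log (a x / T x) ≤ Real.log s := by
    have hpt : ∀ x, T x * Real.log (a x / T x) ≤ T x * Real.log s + (a x / s - T x) := by
      intro x
      rcases eq_or_lt_of_le (hT0 x) with h0 | h0
      · rw [← h0]
        have : (0:ℝ) ≤ a x / s := le_of_lt (div_pos (ha x) hspos)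
        simp only [zero_mul, zero_add, sub_zero]
        linarith
      · have h1 : a x / T x = s * (a x / (T x * s)) := by
          field_simp
        rw [h1, Real.log_mul (ne_of_gt hspos) (ne_of_gt (div_pos (ha x) (by positivity)))]
        have h2 : Real.log (a x / (T x * s)) ≤ a x / (T x * s) - 1 :=
          Real.log_le_sub_one_of_pos (div_pos (ha x) (by positivity))
        have h3 : T x * (a x / (T x * s)) = a x / s := by
          field_simp
        nlinarith
    calc ∑ x, T x * Real.log (a x / T x)
        ≤ ∑ x, (T x * Real.log s + (a x / s - T x)) := Finset.sum_le_sum fun x _ => hpt x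
      _ = Real.log s := by
          rw [Finset.sum_add_distrib, ← Finset.sum_mul, hT1, Finset.sum_sub_distrib,
            ← Finset.sum_div, ← hs, hT1]
          field_simp
          ring
  have hlog2 : (0:ℝ) < Real.log 2 := Real.log_pos one_lt_two
  have heq : ∑ x, T x * Real.logb 2 (T x / a x)
      = (- ∑ x, T x * Real.log (a x / T x)) / Real.log 2 := by
    rw [← Finset.sum_neg_distrib, Finset.sum_div]
    refine Finset.sum_congr rfl fun x _ => ?_
    rcases eq_or_lt_of_le (hT0 x) with h0 | h0
    · rw [← h0]; simp
    · rw [Real.logb, Real.log_div (ne_of_gt h0) (ne_of_gt (ha x)),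
        Real.log_div (ne_of_gt (ha x)) (ne_of_gt h0)]
      field_simp
      ring
  rw [heq, Real.logb]
  rw [neg_div, neg_le_neg_iff, div_le_div_iff_of_pos_right hlog2]
  exact key

lemma chernoff_le_max {α : Type*} [Fintype α] (P Q T : α → ℝ)
    (hP : ∀ x, 0 < P x) (hQ : ∀ x, 0 < Q x)
    (hT0 : ∀ x, 0 ≤ T x) (hT1 : ∑ x, T x = 1) :
    chernoff P Q ≤ max (KL T P) (KL T Q) := by
  rw [chernoff, neg_le]
  apply le_csInf ((Set.nonempty_Icc.2 zero_le_one).image _)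
  rintro y ⟨l, ⟨hl0, hl1⟩, rfl⟩
  simp only
  set a : α → ℝ := fun x => P x ^ l * Q x ^ (1 - l) with ha
  have hapos : ∀ x, 0 < a x := fun x =>
    mul_pos (Real.rpow_pos_of_pos (hP x) _) (Real.rpow_pos_of_pos (hQ x) _)
  have h1 := gibbs_aux T a hT0 hT1 hapos
  have h2 : ∑ x, T x * Real.logb 2 (T x / a x) = l * KL T P + (1-l) * KL T Q := by
    rw [KL, KL, Finset.mul_sum, Finset.mul_sum, ← Finset.sum_add_distrib]
    refine Finset.sum_congr rfl fun x _ => ?_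
    rcases eq_or_lt_of_le (hT0 x) with h0 | h0
    · rw [← h0]; ring
    · have hx : Real.logb 2 (T x / a x)
          = l * Real.logb 2 (T x / P x) + (1-l) * Real.logb 2 (T x / Q x) := by
        rw [Real.logb, Real.logb, Real.logb,
          Real.log_div (ne_of_gt h0) (ne_of_gt (hapos x)),
          Real.log_div (ne_of_gt h0) (ne_of_gt (hP x)),
          Real.log_div (ne_of_gt h0) (ne_of_gt (hQ x)), ha]
        simp only
        rw [Real.log_mul (ne_of_gt (Real.rpow_pos_of_pos (hP x) _))
          (ne_of_gt (Real.rpow_pos_of_pos (hQ x) _)),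
          Real.log_rpow (hP x), Real.log_rpow (hQ x)]
        field_simp
        ring
      rw [hx]; ring
  have h3 : l * KL T P + (1-l) * KL T Q ≤ max (KL T P) (KL T Q) := by
    have h4 := le_max_left (KL T P) (KL T Q)
    have h5 := le_max_right (KL T P) (KL T Q)
    nlinarith
  rw [h2] at h1
  linarith

lemma count_sum {α : Type*} [Fintype α] [DecidableEq α] {n : ℕ} (xv : Fin n → α) :
    ∑ a : α, (Finset.univ.filter fun i => xv i = a).card = n := by
  rw [← Finset.card_eq_sum_card_fiberwise (f := xv) (fun x _ => Finset.mem_univ (xv x))]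
  simp

lemma card_counts_le {α : Type*} [Fintype α] [DecidableEq α] {n : ℕ}
    (hα : 1 ≤ Fintype.card α) :
    (Finset.image (fun xv : Fin n → α => fun a => (Finset.univ.filter fun i => xv i = a).card)
      Finset.univ).card ≤ (n+1) ^ (Fintype.card α - 1) := by
  classical
  have hne : Nonempty α := Fintype.card_pos_iff.mp hα
  obtain ⟨a0⟩ := hne
  set cnt := fun xv : Fin n → α => fun a => (Finset.univ.filter fun i => xv i = a).card with hcnt
  have hmem : ∀ c ∈ Finset.image cnt Finset.univ, (∀ a, c a ≤ n) ∧ ∑ a, c a = n := by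
    intro c hc
    obtain ⟨xv, _, rfl⟩ := Finset.mem_image.mp hc
    constructor
    · intro a
      calc (Finset.univ.filter fun i => xv i = a).card ≤ (Finset.univ : Finset (Fin n)).card :=
            Finset.card_filter_le _ _
        _ = n := by simp
    · exact count_sum xv
  set F : (α → ℕ) → ({x : α // x ≠ a0} → Fin (n+1)) :=
    fun c x => ⟨min (c x.1) n, by omega⟩ with hF
  have hinj : Set.InjOn F (Finset.image cnt Finset.univ : Finset (α → ℕ)) := by
    intro c hc c' hc' hFe
    obtain ⟨hcle, hcsum⟩ := hmem c hc
    obtain ⟨hcle', hcsum'⟩ := hmem c' hc'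
    have hag : ∀ x : α, x ≠ a0 → c x = c' x := by
      intro x hx
      have := congrFun hFe ⟨x, hx⟩
      have h1 : min (c x) n = min (c' x) n := by
        simpa [hF, Fin.mk.injEq] using this
      have := hcle x; have := hcle' x
      omega
    have hsum0 : c a0 + ∑ x ∈ Finset.univ.erase a0, c x = n := by
      rw [Finset.add_sum_erase _ c (Finset.mem_univ a0)]; exact hcsum
    have hsum0' : c' a0 + ∑ x ∈ Finset.univ.erase a0, c' x = n := by
      rw [Finset.add_sum_erase _ c' (Finset.mem_univ a0)]; exact hcsum'
    have heq : ∑ x ∈ Finset.univ.erase a0, c x = ∑ x ∈ Finset.univ.erase a0, c' x :=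
      Finset.sum_congr rfl fun x hx => hag x (Finset.ne_of_mem_erase hx)
    funext x
    by_cases hx : x = a0
    · subst hx; omega
    · exact hag x hx
  calc (Finset.image cnt Finset.univ).card
      ≤ (Finset.univ : Finset ({x : α // x ≠ a0} → Fin (n+1))).card :=
        Finset.card_le_card_of_injOn F (fun c _ => Finset.mem_univ _) hinj
    _ = (n+1) ^ (Fintype.card α - 1) := by
        rw [Finset.card_univ, Fintype.card_fun]
        congr 1
        · simp
        · have := Fintype.card_subtype_compl (fun x : α => x = a0)
          simpa [Fintype.card_subtype_eq] using this

lemma sum_type_prod_le {α : Type*} [Fintype α] [DecidableEq α] {n : ℕ} (hn : 0 < n)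
    (hα : 1 ≤ Fintype.card α) :
    ∑ xv : Fin n → α, ∏ k, typeOf xv (xv k) ≤ ((n+1) ^ (Fintype.card α - 1) : ℕ) := by
  classical
  set cnt := fun xv : Fin n → α => fun a => (Finset.univ.filter fun i => xv i = a).card with hcnt
  have hfib : ∑ xv : Fin n → α, ∏ k, typeOf xv (xv k)
      = ∑ c ∈ Finset.image cnt Finset.univ,
          ∑ xv ∈ Finset.univ.filter (fun xv => cnt xv = c), ∏ k, typeOf xv (xv k) :=
    (Finset.sum_fiberwise_of_maps_to (fun xv _ => Finset.mem_image_of_mem cnt (Finset.mem_univ xv)) _).symm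
  rw [hfib]
  have hinner : ∀ c ∈ Finset.image cnt Finset.univ,
      ∑ xv ∈ Finset.univ.filter (fun xv => cnt xv = c), ∏ k, typeOf xv (xv k) ≤ 1 := by
    intro c hc
    obtain ⟨xv0, _, hxv0⟩ := Finset.mem_image.mp hc
    set Tc : α → ℝ := fun a => (c a : ℝ) / n with hTc
    have hstep : ∑ xv ∈ Finset.univ.filter (fun xv => cnt xv = c), ∏ k, typeOf xv (xv k)
        = ∑ xv ∈ Finset.univ.filter (fun xv => cnt xv = c), ∏ k, Tc (xv k) := by
      refine Finset.sum_congr rfl fun xv hxv => ?_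
      have hce : cnt xv = c := (Finset.mem_filter.mp hxv).2
      refine Finset.prod_congr rfl fun k _ => ?_
      rw [typeOf, hTc, ← hce]
    rw [hstep]
    calc ∑ xv ∈ Finset.univ.filter (fun xv => cnt xv = c), ∏ k, Tc (xv k)
        ≤ ∑ xv : Fin n → α, ∏ k, Tc (xv k) := by
          apply Finset.sum_le_sum_of_subset_of_nonneg (Finset.filter_subset _ _)
          intro xv _ _
          exact Finset.prod_nonneg fun k _ => by positivity
      _ = (∑ a, Tc a) ^ n := (Fintype.sum_pow Tc n).symm
      _ = 1 := by
          have hsum : ∑ a, Tc a = 1 := by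
            rw [hTc, ← Finset.sum_div]
            rw [show ∑ a, (c a : ℝ) = (n : ℝ) by
              rw [← Nat.cast_sum]
              norm_cast
              rw [← hxv0]
              exact count_sum xv0]
            field_simp
          rw [hsum, one_pow]
  calc ∑ c ∈ Finset.image cnt Finset.univ,
        ∑ xv ∈ Finset.univ.filter (fun xv => cnt xv = c), ∏ k, typeOf xv (xv k)
      ≤ ∑ c ∈ Finset.image cnt Finset.univ, (1:ℝ) := Finset.sum_le_sum hinner
    _ = ((Finset.image cnt Finset.univ).card : ℝ) := by simp
    _ ≤ (((n+1) ^ (Fintype.card α - 1) : ℕ) : ℝ) := by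
        exact_mod_cast card_counts_le hα

theorem stmt17 {α : Type*} [Fintype α] [DecidableEq α] {M n : ℕ} (hM : 2 ≤ M) (hn : 0 < n)
    (Ps Qs : Fin M → α → ℝ) (εs : Fin M → ℝ)
    (hP0 : ∀ j x, 0 ≤ Ps j x) (hP1 : ∀ j, ∑ x, Ps j x = 1)
    (hQ0 : ∀ j x, 0 ≤ Qs j x) (hQ1 : ∀ j, ∑ x, Qs j x = 1)
    (hεpos : ∀ j, 0 < εs j)
    (hV : ∀ j, (1/2) * ∑ x, |Ps j x - Qs j x| ≤ εs j)
    (Pbar : Fin M → α → ℝ)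
    (hPbar : ∀ j x, Pbar j x = (Qs j x + εs j) / (1 + (Fintype.card α : ℝ) * εs j))
    (ε : ℝ) (hεub : ∀ j, εs j ≤ ε) (hεmem : ∃ j, εs j = ε)
    (prior : Fin M → ℝ) (hprior : ∀ i, 0 < prior i) (hprior1 : ∑ i, prior i = 1)
    (d : (Fin n → α) → Fin M)
    (hd : ∀ (xv : Fin n → α) (j : Fin M),
      KL (typeOf xv) (Pbar (d xv)) ≤ KL (typeOf xv) (Pbar j)) :
    (∑ xv : Fin n → α, ∑ i, prior i * (if d xv = i then 0 else ∏ k, Ps i (xv k))) ≤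
      (2:ℝ) ^ (-(n:ℝ) *
        (sInf {y : ℝ | ∃ i j : Fin M, i ≠ j ∧ y = chernoff (Pbar i) (Pbar j)} -
          Real.logb 2 (1 + (Fintype.card α : ℝ) * ε) -
          ((Fintype.card α : ℝ) - 1) * Real.logb 2 (n + 1) / n -
          Real.logb 2 M / n)) := by
  classical
  by_cases hα0 : Fintype.card α = 0
  · haveI : IsEmpty α := Fintype.card_eq_zero_iff.mp hα0
    haveI : Nonempty (Fin n) := ⟨⟨0, hn⟩⟩
    haveI : IsEmpty (Fin n → α) := ⟨fun f => IsEmpty.false (f (Classical.arbitrary (Fin n)))⟩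
    rw [Finset.univ_eq_empty, Finset.sum_empty]
    positivity
  have hα1 : 1 ≤ Fintype.card α := Nat.one_le_iff_ne_zero.mpr hα0
  set A : ℝ := (Fintype.card α : ℝ) with hA
  have hA0 : 0 ≤ A := Nat.cast_nonneg _
  obtain ⟨j0, hj0⟩ := hεmem
  have hεpos' : 0 < ε := hj0 ▸ hεpos j0
  set K : ℝ := 1 + A * ε with hK
  have hKpos : 0 < K := by nlinarith
  set S : Set ℝ := {y : ℝ | ∃ i j : Fin M, i ≠ j ∧ y = chernoff (Pbar i) (Pbar j)} with hS
  have hSbdd : BddBelow S := by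
    have hfin : S.Finite := by
      apply Set.Finite.subset
        (Set.finite_range (fun p : Fin M × Fin M => chernoff (Pbar p.1) (Pbar p.2)))
      rintro y ⟨i, j, _, rfl⟩
      exact ⟨(i, j), rfl⟩
    exact hfin.bddBelow
  set C : ℝ := sInf S with hC
  have hden : ∀ j : Fin M, (0:ℝ) < 1 + A * εs j := fun j => by nlinarith [hεpos j]
  have hPbarpos : ∀ j x, 0 < Pbar j x := by
    intro j x
    rw [hPbar]
    exact div_pos (by nlinarith [hQ0 j x, hεpos j]) (hden j)
  have hPbar0 : ∀ j x, 0 ≤ Pbar j x := fun j x => le_of_lt (hPbarpos j x)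
  have htype0 : ∀ (xv : Fin n → α) (a : α), 0 ≤ typeOf xv a := fun xv a =>
    div_nonneg (Nat.cast_nonneg _) (Nat.cast_nonneg _)
  have hPK : ∀ j x, Ps j x ≤ K * Pbar j x := by
    intro j x
    have hsum0 : ∑ y, (Ps j y - Qs j y) = 0 := by
      rw [Finset.sum_sub_distrib, hP1 j, hQ1 j]
      ring
    have habs : |Ps j x - Qs j x| ≤ εs j :=
      le_trans (abs_le_half_sum (fun y => Ps j y - Qs j y) hsum0 x) (hV j)
    have h1 : Ps j x ≤ Qs j x + εs j := by
      have := (abs_le.mp habs).2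
      linarith
    have h2 : Pbar j x * (1 + A * εs j) = Qs j x + εs j := by
      rw [hPbar, div_mul_cancel₀ _ (ne_of_gt (hden j))]
    have h3 : 1 + A * εs j ≤ K := by
      rw [hK]
      nlinarith [hεub j]
    calc Ps j x ≤ Qs j x + εs j := h1
      _ = Pbar j x * (1 + A * εs j) := h2.symm
      _ ≤ Pbar j x * K := mul_le_mul_of_nonneg_left h3 (hPbar0 j x)
      _ = K * Pbar j x := mul_comm _ _
  have hmain : ∀ (xv : Fin n → α) (i : Fin M), d xv ≠ i →
      ∏ k, Ps i (xv k) ≤ K ^ n * (2:ℝ) ^ (-(n:ℝ) * C) * ∏ k, typeOf xv (xv k) := by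
    intro xv i hnei
    set c : α → ℕ := fun a => (Finset.univ.filter fun k => xv k = a).card with hc
    set T : α → ℝ := typeOf xv with hT
    have hTa : ∀ a, T a = (c a : ℝ) / n := fun a => rfl
    have hT0 : ∀ a, 0 ≤ T a := fun a => htype0 xv a
    have hcsum : ∑ a, c a = n := count_sum xv
    have hT1 : ∑ a, T a = 1 := by
      have h1 : ∑ a, T a = ∑ a, ((c a : ℝ) / n) := Finset.sum_congr rfl fun a _ => hTa a
      rw [h1, ← Finset.sum_div, ← Nat.cast_sum, hcsum]
      field_simp
    have hczero : ∀ a, a ∉ Finset.image xv Finset.univ → c a = 0 := by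
      intro a hna
      rw [hc]
      simp only
      rw [Finset.card_eq_zero, Finset.filter_eq_empty_iff]
      intro k _
      intro hk
      exact hna (Finset.mem_image.mpr ⟨k, Finset.mem_univ k, hk⟩)
    have hprod_comp : ∀ g : α → ℝ, ∏ k, g (xv k) = ∏ a, g a ^ c a := by
      intro g
      rw [Finset.prod_comp g xv]
      refine Finset.prod_subset (Finset.subset_univ _) fun a _ hna => ?_
      show g a ^ c a = 1
      rw [hczero a hna, pow_zero]
    have hKL : C ≤ KL T (Pbar i) := by
      have h1 : KL T (Pbar (d xv)) ≤ KL T (Pbar i) := hd xv i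
      have h2 := chernoff_le_max (Pbar i) (Pbar (d xv)) T (hPbarpos i) (hPbarpos (d xv)) hT0 hT1
      have h3 : max (KL T (Pbar i)) (KL T (Pbar (d xv))) = KL T (Pbar i) := max_eq_left h1
      have h4 : chernoff (Pbar i) (Pbar (d xv)) ∈ S := ⟨i, d xv, Ne.symm hnei, rfl⟩
      calc C ≤ chernoff (Pbar i) (Pbar (d xv)) := csInf_le hSbdd h4
        _ ≤ KL T (Pbar i) := le_trans h2 (le_of_eq h3)
    have hTor : ∀ a, 0 < T a ∨ c a = 0 := by
      intro a
      rcases Nat.eq_zero_or_pos (c a) with h0 | h0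
      · exact Or.inr h0
      · left
        rw [hTa]
        have h1 : (0:ℝ) < (c a : ℝ) := by exact_mod_cast h0
        have h2 : (0:ℝ) < (n : ℝ) := by exact_mod_cast hn
        positivity
    have hexp : ∑ a, (c a : ℝ) * Real.logb 2 (Pbar i a)
        = (∑ a, (c a : ℝ) * Real.logb 2 (T a)) - (n:ℝ) * KL T (Pbar i) := by
      rw [KL, Finset.mul_sum, ← Finset.sum_sub_distrib]
      refine Finset.sum_congr rfl fun a _ => ?_
      rcases Nat.eq_zero_or_pos (c a) with h0 | h0
      · have hTz : T a = 0 := by rw [hTa, h0]; simp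
        rw [hTz, h0]
        simp
      · have hTpos : 0 < T a := by
          rcases hTor a with h | h
          · exact h
          · omega
        have hcn : (c a : ℝ) = (n:ℝ) * T a := by
          rw [hTa]
          field_simp
        rw [Real.logb_div (ne_of_gt hTpos) (ne_of_gt (hPbarpos i a)), hcn]
        ring
    calc ∏ k, Ps i (xv k)
        ≤ ∏ k, (K * Pbar i (xv k)) :=
          Finset.prod_le_prod (fun k _ => hP0 i (xv k)) (fun k _ => hPK i (xv k))
      _ = K ^ n * ∏ k, Pbar i (xv k) := by
          rw [Finset.prod_mul_distrib, Finset.prod_const, Finset.card_univ, Fintype.card_fin]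
      _ = K ^ n * (2:ℝ) ^ ((∑ a, (c a : ℝ) * Real.logb 2 (T a)) - (n:ℝ) * KL T (Pbar i)) := by
          rw [hprod_comp (Pbar i), prod_pow_eq_rpow _ _ (fun a => Or.inl (hPbarpos i a)), hexp]
      _ = K ^ n * ((2:ℝ) ^ (∑ a, (c a : ℝ) * Real.logb 2 (T a))
            * (2:ℝ) ^ (-(n:ℝ) * KL T (Pbar i))) := by
          rw [sub_eq_add_neg, Real.rpow_add two_pos, neg_mul]
      _ ≤ K ^ n * ((2:ℝ) ^ (∑ a, (c a : ℝ) * Real.logb 2 (T a)) * (2:ℝ) ^ (-(n:ℝ) * C)) := by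
          refine mul_le_mul_of_nonneg_left ?_ (by positivity)
          refine mul_le_mul_of_nonneg_left ?_ (by positivity)
          apply Real.rpow_le_rpow_of_exponent_le one_le_two
          have hn0 : (0:ℝ) ≤ (n:ℝ) := Nat.cast_nonneg _
          nlinarith
      _ = K ^ n * (2:ℝ) ^ (-(n:ℝ) * C) * ∏ k, typeOf xv (xv k) := by
          rw [← prod_pow_eq_rpow T c hTor, ← hprod_comp T, ← hT]
          ring
  have hNpos : (0:ℝ) < (((n+1) ^ (Fintype.card α - 1) : ℕ) : ℝ) := by
    have : 0 < (n+1) ^ (Fintype.card α - 1) := Nat.pow_pos (by omega)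
    exact_mod_cast this
  have hbound : (∑ xv : Fin n → α, ∑ i, prior i * (if d xv = i then 0 else ∏ k, Ps i (xv k)))
      ≤ K ^ n * (2:ℝ) ^ (-(n:ℝ) * C) * (((n+1) ^ (Fintype.card α - 1) : ℕ) : ℝ) := by
    calc ∑ xv : Fin n → α, ∑ i, prior i * (if d xv = i then 0 else ∏ k, Ps i (xv k))
        ≤ ∑ xv : Fin n → α, ∑ i : Fin M,
            prior i * (K ^ n * (2:ℝ) ^ (-(n:ℝ) * C) * ∏ k, typeOf xv (xv k)) := by
          refine Finset.sum_le_sum fun xv _ => Finset.sum_le_sum fun i _ => ?_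
          refine mul_le_mul_of_nonneg_left ?_ (le_of_lt (hprior i))
          by_cases hcase : d xv = i
          · rw [if_pos hcase]
            have h1 : 0 ≤ ∏ k, typeOf xv (xv k) :=
              Finset.prod_nonneg fun k _ => htype0 xv (xv k)
            positivity
          · rw [if_neg hcase]
            exact hmain xv i hcase
      _ = ∑ xv : Fin n → α, (K ^ n * (2:ℝ) ^ (-(n:ℝ) * C) * ∏ k, typeOf xv (xv k)) := by
          refine Finset.sum_congr rfl fun xv _ => ?_
          rw [← Finset.sum_mul, hprior1, one_mul]
      _ = K ^ n * (2:ℝ) ^ (-(n:ℝ) * C) * ∑ xv : Fin n → α, ∏ k, typeOf xv (xv k) := by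
          rw [Finset.mul_sum]
      _ ≤ K ^ n * (2:ℝ) ^ (-(n:ℝ) * C) * (((n+1) ^ (Fintype.card α - 1) : ℕ) : ℝ) :=
          mul_le_mul_of_nonneg_left (sum_type_prod_le hn hα1) (by positivity)
  refine le_trans hbound ?_
  have hMpos : (0:ℝ) < (M:ℝ) := by
    have : 0 < M := by omega
    exact_mod_cast this
  have hM1 : (1:ℝ) ≤ (M:ℝ) := by
    have : 1 ≤ M := by omega
    exact_mod_cast this
  have hnne : (n:ℝ) ≠ 0 := Nat.cast_ne_zero.mpr (Nat.pos_iff_ne_zero.mp hn)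
  have hrhs : (2:ℝ) ^ (-(n:ℝ) * (C - Real.logb 2 K - (A - 1) * Real.logb 2 ((n:ℝ) + 1) / n
        - Real.logb 2 M / n))
      = (2:ℝ) ^ (-(n:ℝ) * C) * K ^ n * (((n+1) ^ (Fintype.card α - 1) : ℕ) : ℝ) * (M:ℝ) := by
    have hexp : -(n:ℝ) * (C - Real.logb 2 K - (A-1) * Real.logb 2 ((n:ℝ)+1) / n
          - Real.logb 2 M / n)
        = (-(n:ℝ) * C) + ((n:ℝ) * Real.logb 2 K) + ((A-1) * Real.logb 2 ((n:ℝ)+1))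
          + Real.logb 2 M := by
      field_simp
      ring
    rw [hexp, Real.rpow_add two_pos, Real.rpow_add two_pos, Real.rpow_add two_pos]
    have e1 : (2:ℝ) ^ ((n:ℝ) * Real.logb 2 K) = K ^ n := by
      rw [mul_comm, Real.rpow_mul (by norm_num : (0:ℝ) ≤ 2),
        Real.rpow_logb two_pos (by norm_num) hKpos, Real.rpow_natCast]
    have e2 : (2:ℝ) ^ ((A-1) * Real.logb 2 ((n:ℝ)+1))
        = (((n+1) ^ (Fintype.card α - 1) : ℕ) : ℝ) := by
      have hA1 : A - 1 = ((Fintype.card α - 1 : ℕ) : ℝ) := by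
        rw [Nat.cast_sub hα1]
        simp [hA]
      have hn1 : (0:ℝ) < (n:ℝ) + 1 := by positivity
      rw [hA1, mul_comm, Real.rpow_mul (by norm_num : (0:ℝ) ≤ 2),
        Real.rpow_logb two_pos (by norm_num) hn1, Real.rpow_natCast]
      push_cast
      ring
    have e3 : (2:ℝ) ^ (Real.logb 2 (M:ℝ)) = (M:ℝ) :=
      Real.rpow_logb two_pos (by norm_num) hMpos
    rw [e1, e2, e3]
  rw [hrhs]
  have hre : K ^ n * (2:ℝ) ^ (-(n:ℝ) * C) * (((n+1) ^ (Fintype.card α - 1) : ℕ) : ℝ)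
      = (2:ℝ) ^ (-(n:ℝ) * C) * K ^ n * (((n+1) ^ (Fintype.card α - 1) : ℕ) : ℝ) := by
    ring
  rw [hre]
  exact le_mul_of_one_le_right (by positivity) hM1
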